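/- (Normal form for word equivalence) In Mal'cev's construction over a neat local group, if two words x, y ∈ G* are equivalent (connected by a finite chain of contractions and expansions), then there is a chain from x to y consisting of first finitely many expansions followed by finitely many contractions. -/
import Mathlib


/-- A neat local group: inversion is everywhere defined, products with the
identity and with inverses are defined, partial associativity holds, and
`(xy, y⁻¹) ∈ Ω` whenever `(x, y) ∈ Ω`. -/
class NeatLocalGroup (G : Type*) where
  one : G
  mul : G → G → G
  inv : G → G
  defined : G → G → Prop
  defined_one_left : ∀ x : G, defined one x
  defined_one_right : ∀ x : G, defined x one
  one_mul : ∀ x : G, mul one x = x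
  mul_one : ∀ x : G, mul x one = x
  defined_inv_left : ∀ x : G, defined (inv x) x
  defined_inv_right : ∀ x : G, defined x (inv x)
  inv_mul_cancel : ∀ x : G, mul (inv x) x = one
  mul_inv_cancel : ∀ x : G, mul x (inv x) = one
  mul_assoc : ∀ x y z : G, defined x y → defined y z → defined (mul x y) z →
      defined x (mul y z) → mul (mul x y) z = mul x (mul y z)
  neat : ∀ x y : G, defined x y → defined (mul x y) (inv y)

namespace NeatLocalGroup

variable {G : Type*} [NeatLocalGroup G]

/-- One contraction step on words over `G`: either merge an adjacent pair
whose product is defined (type I), or delete an adjacent pair `(a, a⁻¹)`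
(type II).  `Step x y` means `y` is a contraction of `x`; equivalently, `x`
is an expansion of `y`. -/
inductive Step : List G → List G → Prop
  | contr1 (u v : List G) (a b : G) (h : defined a b) :
      Step (u ++ a :: b :: v) (u ++ mul a b :: v)
  | contr2 (u v : List G) (a : G) :
      Step (u ++ a :: inv a :: v) (u ++ v)

/-- Two words are equivalent iff they are connected by a finite chain of
contractions and expansions. -/
instance wordSetoid : Setoid (List G) :=
  ⟨Relation.EqvGen Step, Relation.EqvGen.is_equivalence _⟩

/-- The set of equivalence classes of words over `G`. -/
abbrev WordQuot (G : Type*) [NeatLocalGroup G] : Type _ :=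
  Quotient (wordSetoid (G := G))

/-- `(a₁,…,aₙ) ⇝ b`: some parenthesization of the word has all intermediate
products defined and evaluates to `b`. -/
inductive Eval : List G → G → Prop
  | nil : Eval [] (one : G)
  | single (a : G) : Eval [a] a
  | app {l₁ l₂ : List G} {b c : G} : l₁ ≠ [] → l₂ ≠ [] →
      Eval l₁ b → Eval l₂ c → defined b c → Eval (l₁ ++ l₂) (mul b c)

/-- `G` is globally associative if any two parenthesized evaluations of the
same word agree. -/
def GloballyAssociative (G : Type*) [NeatLocalGroup G] : Prop :=
  ∀ (l : List G) (b c : G), Eval l b → Eval l c → b = c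

end NeatLocalGroup

namespace NeatLocalGroup

variable {G : Type*} [NeatLocalGroup G]

private lemma inv_inv' (x : G) : inv (inv x) = x := by
  have h := mul_assoc (inv (inv x)) (inv x) x (defined_inv_left (inv x)) (defined_inv_left x)
    (by rw [inv_mul_cancel]; exact defined_one_left x)
    (by rw [inv_mul_cancel]; exact defined_one_right (inv (inv x)))
  rw [inv_mul_cancel, one_mul, inv_mul_cancel, mul_one] at h
  exact h.symm

private lemma mul_inv_right' {r s : G} (h : defined r s) : mul (mul r s) (inv s) = r := by
  have h2 := mul_assoc r s (inv s) h (defined_inv_right s) (neat r s h)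
    (by rw [mul_inv_cancel]; exact defined_one_right r)
  rw [mul_inv_cancel, mul_one] at h2
  exact h2

private lemma step_cases {a b : List G} (h : Step a b) :
    (∃ u v p q, defined p q ∧ a = u ++ p :: q :: v ∧ b = u ++ mul p q :: v) ∨
    (∃ u v g, a = u ++ g :: inv g :: v ∧ b = u ++ v) := by
  cases h with
  | contr1 u v p q hpq => exact Or.inl ⟨u, v, p, q, hpq, rfl, rfl⟩
  | contr2 u v g => exact Or.inr ⟨u, v, g, rfl, rfl⟩

private lemma step_eq {a b a' b' : List G} (h : Step a b) (ha : a = a') (hb : b = b') :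
    Step a' b' := ha ▸ hb ▸ h

private lemma overlap_case {u v : List G} {p q r s : G} (hpq : defined p q) (hrs : defined r s)
    (hx : mul p q = mul r s) :
    ∃ d, Relation.ReflGen (fun a b : List G => Step b a) (u ++ p :: q :: v) d ∧
      Relation.ReflTransGen (fun a b : List G => Step b a) (u ++ r :: s :: v) d := by
  refine ⟨u ++ p :: q :: inv s :: s :: v, Relation.ReflGen.single ?_, ?_⟩
  · exact step_eq (Step.contr2 (u ++ [p, q]) v (inv s)) (by simp [inv_inv']) (by simp)
  · have hdef : defined (mul p q) (inv s) := by rw [hx]; exact neat r s hrs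
    have s1 : Step (u ++ p :: q :: inv s :: s :: v) (u ++ mul p q :: inv s :: s :: v) :=
      Step.contr1 u (inv s :: s :: v) p q hpq
    have s2 : Step (u ++ mul p q :: inv s :: s :: v) (u ++ r :: s :: v) :=
      step_eq (Step.contr1 u (s :: v) (mul p q) (inv s) hdef) rfl
        (by rw [hx, mul_inv_right' hrs])
    exact Relation.ReflTransGen.head s2 (Relation.ReflTransGen.single s1)

private lemma localConf {m b c : List G} (hb : Step b m) (hc : Step c m) :
    ∃ d, Relation.ReflGen (fun a b : List G => Step b a) b d ∧
      Relation.ReflTransGen (fun a b : List G => Step b a) c d := by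
  have single2 : ∀ d : List G, Step d b → Step d c →
      ∃ d, Relation.ReflGen (fun a b : List G => Step b a) b d ∧
        Relation.ReflTransGen (fun a b : List G => Step b a) c d :=
    fun d h1 h2 => ⟨d, Relation.ReflGen.single h1, Relation.ReflTransGen.single h2⟩
  rcases step_cases hb with ⟨u₁, v₁, p, q, hpq, hb1, hb2⟩ | ⟨u₁, v₁, g, hb1, hb2⟩ <;>
    rcases step_cases hc with ⟨u₂, v₂, r, s, hrs, hc1, hc2⟩ | ⟨u₂, v₂, g', hc1, hc2⟩ <;>
    subst hb1 <;> subst hc1 <;> subst hb2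
  · -- type I / type I
    rcases List.append_eq_append_iff.mp hc2 with ⟨t, htu, htv⟩ | ⟨t, htu, htv⟩
    · cases t with
      | nil =>
        simp only [List.append_nil] at htu
        subst htu
        simp only [List.nil_append, List.cons.injEq] at htv
        obtain ⟨hx, hv⟩ := htv
        subst hv
        exact overlap_case hpq hrs hx
      | cons x t =>
        simp only [List.cons_append, List.cons.injEq] at htv
        obtain ⟨hx, hv⟩ := htv
        subst hx; subst hv; subst htu
        refine single2 (u₁ ++ p :: q :: (t ++ r :: s :: v₂)) ?_ ?_
        · exact step_eq (Step.contr1 (u₁ ++ p :: q :: t) v₂ r s hrs)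
            (by first | rfl | simp) (by first | rfl | simp)
        · exact step_eq (Step.contr1 u₁ (t ++ r :: s :: v₂) p q hpq)
            (by first | rfl | simp) (by first | rfl | simp)
    · cases t with
      | nil =>
        simp only [List.append_nil] at htu
        subst htu
        simp only [List.nil_append, List.cons.injEq] at htv
        obtain ⟨hx, hv⟩ := htv
        subst hv
        exact overlap_case hpq hrs hx.symm
      | cons x t =>
        simp only [List.cons_append, List.cons.injEq] at htv
        obtain ⟨hx, hv⟩ := htv
        subst hx; subst hv; subst htu
        refine single2 (u₂ ++ r :: s :: (t ++ p :: q :: v₁)) ?_ ?_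
        · exact step_eq (Step.contr1 u₂ (t ++ p :: q :: v₁) r s hrs)
            (by first | rfl | simp) (by first | rfl | simp)
        · exact step_eq (Step.contr1 (u₂ ++ r :: s :: t) v₁ p q hpq)
            (by first | rfl | simp) (by first | rfl | simp)
  · -- type I / type II
    rcases List.append_eq_append_iff.mp hc2 with ⟨t, htu, htv⟩ | ⟨t, htu, htv⟩
    · cases t with
      | nil =>
        simp only [List.append_nil] at htu
        subst htu
        simp only [List.nil_append] at htv
        subst htv
        refine single2 (u₂ ++ g' :: inv g' :: p :: q :: v₁) ?_ ?_
        · exact Step.contr2 u₂ (p :: q :: v₁) g'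
        · exact step_eq (Step.contr1 (u₂ ++ [g', inv g']) v₁ p q hpq)
            (by first | rfl | simp) (by first | rfl | simp)
      | cons x t =>
        simp only [List.cons_append, List.cons.injEq] at htv
        obtain ⟨hx, hv⟩ := htv
        subst hx; subst hv; subst htu
        refine single2 (u₁ ++ p :: q :: (t ++ g' :: inv g' :: v₂)) ?_ ?_
        · exact step_eq (Step.contr2 (u₁ ++ p :: q :: t) v₂ g')
            (by first | rfl | simp) (by first | rfl | simp)
        · exact step_eq (Step.contr1 u₁ (t ++ g' :: inv g' :: v₂) p q hpq)
            (by first | rfl | simp) (by first | rfl | simp)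
    · subst htu; subst htv
      refine single2 (u₂ ++ g' :: inv g' :: (t ++ p :: q :: v₁)) ?_ ?_
      · exact step_eq (Step.contr2 u₂ (t ++ p :: q :: v₁) g')
          (by first | rfl | simp) (by first | rfl | simp)
      · exact step_eq (Step.contr1 (u₂ ++ g' :: inv g' :: t) v₁ p q hpq)
          (by first | rfl | simp) (by first | rfl | simp)
  · -- type II / type I
    rcases List.append_eq_append_iff.mp hc2 with ⟨t, htu, htv⟩ | ⟨t, htu, htv⟩
    · subst htu; subst htv
      refine single2 (u₁ ++ g :: inv g :: (t ++ r :: s :: v₂)) ?_ ?_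
      · exact step_eq (Step.contr1 (u₁ ++ g :: inv g :: t) v₂ r s hrs)
          (by first | rfl | simp) (by first | rfl | simp)
      · exact step_eq (Step.contr2 u₁ (t ++ r :: s :: v₂) g)
          (by first | rfl | simp) (by first | rfl | simp)
    · cases t with
      | nil =>
        simp only [List.append_nil] at htu
        subst htu
        simp only [List.nil_append] at htv
        subst htv
        refine single2 (u₁ ++ g :: inv g :: r :: s :: v₂) ?_ ?_
        · exact step_eq (Step.contr1 (u₁ ++ [g, inv g]) v₂ r s hrs)
            (by first | rfl | simp) (by first | rfl | simp)
        · exact Step.contr2 u₁ (r :: s :: v₂) g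
      | cons x t =>
        simp only [List.cons_append, List.cons.injEq] at htv
        obtain ⟨hx, hv⟩ := htv
        subst hx; subst hv; subst htu
        refine single2 (u₂ ++ r :: s :: (t ++ g :: inv g :: v₁)) ?_ ?_
        · exact step_eq (Step.contr1 u₂ (t ++ g :: inv g :: v₁) r s hrs)
            (by first | rfl | simp) (by first | rfl | simp)
        · exact step_eq (Step.contr2 (u₂ ++ r :: s :: t) v₁ g)
            (by first | rfl | simp) (by first | rfl | simp)
  · -- type II / type II
    rcases List.append_eq_append_iff.mp hc2 with ⟨t, htu, htv⟩ | ⟨t, htu, htv⟩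
    · subst htu; subst htv
      refine single2 (u₁ ++ g :: inv g :: (t ++ g' :: inv g' :: v₂)) ?_ ?_
      · exact step_eq (Step.contr2 (u₁ ++ g :: inv g :: t) v₂ g')
          (by first | rfl | simp) (by first | rfl | simp)
      · exact step_eq (Step.contr2 u₁ (t ++ g' :: inv g' :: v₂) g)
          (by first | rfl | simp) (by first | rfl | simp)
    · subst htu; subst htv
      refine single2 (u₂ ++ g' :: inv g' :: (t ++ g :: inv g :: v₁)) ?_ ?_
      · exact step_eq (Step.contr2 u₂ (t ++ g :: inv g :: v₁) g')
          (by first | rfl | simp) (by first | rfl | simp)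
      · exact step_eq (Step.contr2 (u₂ ++ g' :: inv g' :: t) v₁ g)
          (by first | rfl | simp) (by first | rfl | simp)

end NeatLocalGroup

open NeatLocalGroup in
/-- (Normal form) If two words over a neat local group are connected by a
chain of contractions and expansions, they are connected by a special chain:
finitely many expansions followed by finitely many contractions. -/
theorem special_chain_of_equiv (G : Type*) [NeatLocalGroup G]
    (x y : List G) (h : Relation.EqvGen Step x y) :
    ∃ w : List G,
      Relation.ReflTransGen (fun a b : List G => Step b a) x w ∧
      Relation.ReflTransGen (Step : List G → List G → Prop) w y := by
  have hcr := Relation.equivalence_join_reflTransGen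
    (r := fun a b : List G => Step b a) (fun _ _ _ h1 h2 => localConf h1 h2)
  have key : Relation.Join (Relation.ReflTransGen (fun a b : List G => Step b a)) x y := by
    induction h with
    | rel a b hab => exact ⟨a, Relation.ReflTransGen.refl, Relation.ReflTransGen.single hab⟩
    | refl a => exact hcr.refl a
    | symm a b _ ih => exact hcr.symm ih
    | trans a b c _ _ ih1 ih2 => exact hcr.trans ih1 ih2
  obtain ⟨w, h1, h2⟩ := key
  exact ⟨w, h1, h2.swap⟩
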